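/- Let α < β be countable ordinals satisfying ω^α = α and ω^β = β. Then there is no additive group isomorphism e : LocallyConstant (Iic α) ℚ → LocallyConstant (Iic β) ℚ with e((G_{Iic α})_{+,≪}) = (G_{Iic β})_{+,≪}. In particular the unital ordered groups 𝒢_{α+1} and 𝒢_{β+1} are not isomorphic. -/

import Mathlib

set_option linter.unusedSectionVars false

open Ordinal Set Filter Topology

section CB
variable (X : Type*) [TopologicalSpace X]

/-- Iterated Cantor–Bendixson derivative. -/
noncomputable def cbd (δ : Ordinal) : Set X :=
  Ordinal.limitRecOn δ Set.univ (fun _ IH => derivedSet IH)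
    (fun o _ IH => ⋂ (p : {δ' // δ' < o}), IH p.1 p.2)

@[simp] lemma cbd_zero : cbd X 0 = Set.univ := Ordinal.limitRecOn_zero ..

lemma cbd_succ (δ : Ordinal) : cbd X (Order.succ δ) = derivedSet (cbd X δ) :=
  Ordinal.limitRecOn_succ ..

lemma cbd_limit {δ : Ordinal} (h : Order.IsSuccLimit δ) :
    cbd X δ = ⋂ (p : {δ' // δ' < δ}), cbd X p.1 :=
  Ordinal.limitRecOn_limit _ _ _ _ h

variable [T1Space X]

lemma isClosed_cbd (δ : Ordinal) : IsClosed (cbd X δ) := by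
  induction δ using Ordinal.limitRecOn with
  | zero => simp
  | add_one o ih => rw [Ordinal.add_one_eq_succ, cbd_succ]; exact isClosed_derivedSet _
  | limit o ho ih => rw [cbd_limit X ho]; exact isClosed_iInter fun p => ih p.1 p.2

lemma cbd_mono {δ δ' : Ordinal} (h : δ ≤ δ') : cbd X δ' ⊆ cbd X δ := by
  induction δ' using Ordinal.limitRecOn with
  | zero => rw [nonpos_iff_eq_zero.mp h]
  | add_one o ih =>
    rw [Ordinal.add_one_eq_succ] at h ⊢
    rcases (Order.le_succ_iff_eq_or_le.mp h) with rfl | h'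
    · rfl
    · refine subset_trans ?_ (ih h')
      rw [cbd_succ]
      exact (isClosed_iff_derivedSet_subset _).mp (isClosed_cbd X o)
  | limit o ho ih =>
    rcases eq_or_lt_of_le h with rfl | h'
    · rfl
    · rw [cbd_limit X ho]
      exact iInter_subset_of_subset ⟨δ, h'⟩ (by rfl)

end CB

section Subtype
variable {Z : Type*} [TopologicalSpace Z] {p : Z → Prop}

lemma accPt_subtype_iff {x : Subtype p} {S : Set (Subtype p)} :
    AccPt x (𝓟 S) ↔ AccPt (x : Z) (𝓟 (Subtype.val '' S)) := by
  rw [accPt_principal_iff_clusterPt, accPt_principal_iff_clusterPt, ← mem_closure_iff_clusterPt,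
    ← mem_closure_iff_clusterPt, closure_subtype, Set.image_diff Subtype.val_injective,
    Set.image_singleton]

end Subtype

section SingletonAcc
variable {X : Type*} [TopologicalSpace X] [T1Space X]

lemma derivedSet_singleton (a : X) : derivedSet {a} = (∅ : Set X) := by
  ext x
  simp only [mem_derivedSet, mem_empty_iff_false, iff_false]
  intro h
  rw [accPt_principal_iff_clusterPt, ← mem_closure_iff_clusterPt] at h
  by_cases hx : x = a
  · subst hx; simp at h
  · rw [(Set.diff_singleton_eq_self (by simp [hx] : x ∉ ({a} : Set X)) : ({a} : Set X) \ {x} = {a})]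
      at h
    rw [closure_singleton] at h
    exact hx h
end SingletonAcc

-- clopen basis for Iic γ in ordinals
lemma exists_isClopen_Iic {γ : Ordinal} {U : Set (Set.Iic γ)} (hU : IsOpen U)
    {x : Set.Iic γ} (hx : x ∈ U) :
    ∃ C : Set (Set.Iic γ), IsClopen C ∧ x ∈ C ∧ C ⊆ U := by
  obtain ⟨V, hV, rfl⟩ := isOpen_induced_iff.mp hU
  by_cases h0 : (x : Ordinal) = 0
  · refine ⟨Subtype.val ⁻¹' (Set.Iic 0), ⟨?_, ?_⟩, ?_, ?_⟩
    · exact (isClosed_Iic).preimage continuous_subtype_val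
    · have : (Set.Iic (0:Ordinal)) = Set.Iio 1 := by
        ext z; simp [Ordinal.lt_one_iff_zero]
      rw [this]; exact (isOpen_Iio).preimage continuous_subtype_val
    · simp [h0]
    · intro y hy
      have : (y : Ordinal) = 0 := le_antisymm hy zero_le
      have hxy : y = x := Subtype.ext (by rw [this, h0])
      rwa [hxy]
  · have hmem : V ∈ 𝓝 (x : Ordinal) := hV.mem_nhds hx
    obtain ⟨l, hl, hsub⟩ := (SuccOrder.hasBasis_nhds_Ioc_of_exists_lt ⟨0, pos_iff_ne_zero.mpr h0⟩).mem_iff.mp hmem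
    refine ⟨Subtype.val ⁻¹' (Set.Ioc l x), ⟨?_, ?_⟩, ?_, ?_⟩
    · have : Set.Ioc l (x : Ordinal) = Set.Icc (l+1) x := by
        ext z
        simp [Ordinal.add_one_eq_succ, Order.succ_le_iff, -Order.succ_eq_add_one]
      rw [this]; exact (isClosed_Icc).preimage continuous_subtype_val
    · have : Set.Ioc l (x : Ordinal) = Set.Ioo l ((x : Ordinal) + 1) := by
        ext z; simp [Order.lt_add_one_iff]
      rw [this]; exact (isOpen_Ioo).preimage continuous_subtype_val
    · exact ⟨hl, le_rfl⟩
    · exact fun y hy => hsub hy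


section Atoms
open TopologicalSpace
variable {X : Type*} [TopologicalSpace X]

/-- `a` is an atom relative to the closed set `M`, expressed purely through the
predicate `· ∩ M = ∅` and lattice structure. -/
def CbAtom (M : Set X) (a : Clopens X) : Prop :=
  ¬((a : Set X) ∩ M = ∅) ∧ ∀ b c : Clopens X, b ⊔ c = a → b ⊓ c = ⊥ →
    ((b : Set X) ∩ M = ∅ ∨ (c : Set X) ∩ M = ∅)

lemma clopens_coe_finset_sup (s : Finset (Clopens X)) :
    ((s.sup id : Clopens X) : Set X) = ⋃ a ∈ s, (a : Set X) := by
  classical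
  induction s using Finset.induction_on with
  | empty => simp
  | insert _ _ h ih => rw [Finset.sup_insert]; simp [ih]

variable [T2Space X] [CompactSpace X]

lemma finite_of_derivedSet_empty {F : Set X} (hF : IsClosed F) (h : derivedSet F = ∅) :
    F.Finite := by
  have hx : ∀ x : X, ∃ U ∈ 𝓝 x, ∀ y ∈ U ∩ F, y = x := by
    intro x
    have : ¬ AccPt x (𝓟 F) := by
      intro hacc
      have : x ∈ derivedSet F := hacc
      simp [h] at this
    rw [accPt_iff_nhds] at this
    push_neg at this
    obtain ⟨U, hU, hU2⟩ := this
    exact ⟨U, hU, fun y hy => hU2 y hy⟩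
  choose U hU hU2 using hx
  obtain ⟨t, _, ht⟩ := hF.isCompact.elim_nhds_subcover U (fun x _ => hU x)
  refine Set.Finite.subset t.finite_toSet (fun y hy => ?_)
  obtain ⟨x, hx1, hx2⟩ := Set.mem_iUnion₂.mp (ht hy)
  have hyx : y = x := hU2 x y ⟨hx2, hy⟩
  rw [hyx]
  exact Finset.mem_coe.mpr hx1

variable (hbasis : ∀ {U : Set X}, IsOpen U → ∀ {x}, x ∈ U →
    ∃ C : Set X, IsClopen C ∧ x ∈ C ∧ C ⊆ U)

include hbasis in
lemma cbAtom_inter {M : Set X} {a : Clopens X} (h : CbAtom M a) :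
    ∃ x, (a : Set X) ∩ M = {x} := by
  rcases Set.eq_empty_or_nonempty ((a : Set X) ∩ M) with he | ⟨x, hx⟩
  · exact absurd he h.1
  refine ⟨x, Set.eq_singleton_iff_unique_mem.mpr ⟨hx, fun y hy => ?_⟩⟩
  by_contra hne
  obtain ⟨C, hC, hyC, hCsub⟩ := hbasis (isOpen_compl_singleton (x := x)) hne
  have h1 : (a ⊓ ⟨C, hC⟩ : Clopens X) ⊔ (a \ ⟨C, hC⟩) = a := sup_inf_sdiff a _
  have h2 : (a ⊓ ⟨C, hC⟩ : Clopens X) ⊓ (a \ ⟨C, hC⟩) = ⊥ := inf_inf_sdiff a _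
  rcases h.2 _ _ h1 h2 with h3 | h3
  · exact absurd h3 (Set.nonempty_iff_ne_empty.mp ⟨y, ⟨⟨hy.1, hyC⟩, hy.2⟩⟩)
  · refine absurd h3 (Set.nonempty_iff_ne_empty.mp ⟨x, ⟨⟨hx.1, fun hxC => ?_⟩, hx.2⟩⟩)
    exact (hCsub hxC) rfl

lemma cbAtom_of_singleton {M : Set X} {a : Clopens X} {x : X}
    (hx : (a : Set X) ∩ M = {x}) : CbAtom M a := by
  constructor
  · rw [hx]; exact Set.singleton_ne_empty x
  · intro b c hbc hdisj
    have hbm : (b : Set X) ∩ M ⊆ {x} := by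
      rw [← hx]
      exact Set.inter_subset_inter_left _
        (SetLike.coe_subset_coe.mpr (le_of_le_of_eq le_sup_left hbc))
    have hcm : (c : Set X) ∩ M ⊆ {x} := by
      rw [← hx]
      exact Set.inter_subset_inter_left _
        (SetLike.coe_subset_coe.mpr (le_of_le_of_eq le_sup_right hbc))
    by_cases hxb : x ∈ (b : Set X)
    · right
      rw [Set.eq_empty_iff_forall_notMem]
      intro y hy
      have : y = x := hcm hy
      subst this
      have : y ∈ ((b ⊓ c : Clopens X) : Set X) := ⟨hxb, hy.1⟩
      rw [hdisj] at this
      exact this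
    · left
      rw [Set.eq_empty_iff_forall_notMem]
      intro y hy
      have : y = x := hbm hy
      exact hxb (this ▸ hy.1)

include hbasis in
lemma cbd_succ_char {M : Set X} (hM : IsClosed M) (U : Clopens X) :
    (U : Set X) ∩ derivedSet M = ∅ ↔
    ∃ (s : Finset (Clopens X)) (v : Clopens X), (∀ a ∈ s, CbAtom M a) ∧
      ((v : Set X) ∩ M = ∅) ∧ U ≤ s.sup id ⊔ v := by
  classical
  constructor
  · intro hemp
    -- U ∩ M is finite
    set F := (U : Set X) ∩ M with hF
    have hFc : IsClosed F := U.isClopen.isClosed.inter hM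
    have hFd : derivedSet F = ∅ := by
      rw [Set.eq_empty_iff_forall_notMem]
      intro y hy
      have h1 : y ∈ derivedSet M := derivedSet_mono _ _ Set.inter_subset_right hy
      have h2 : y ∈ closure F := derivedSet_subset_closure _ hy
      rw [hFc.closure_eq] at h2
      have : y ∈ (U : Set X) ∩ derivedSet M := ⟨h2.1, h1⟩
      rw [hemp] at this; exact this
    have hFfin : F.Finite := finite_of_derivedSet_empty hFc hFd
    -- for each x ∈ F, find a clopen a with a ∩ M = {x}
    have key : ∀ x ∈ F, ∃ a : Clopens X, (a : Set X) ∩ M = {x} := by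
      intro x hxF
      have hnacc : ¬ AccPt x (𝓟 M) := by
        intro hacc
        have : x ∈ (U : Set X) ∩ derivedSet M := ⟨hxF.1, hacc⟩
        rw [hemp] at this; exact this
      rw [accPt_iff_nhds] at hnacc
      push_neg at hnacc
      obtain ⟨W, hW, hW2⟩ := hnacc
      obtain ⟨O, hOW, hO, hxO⟩ := mem_nhds_iff.mp hW
      obtain ⟨C, hC, hxC, hCO⟩ := hbasis hO hxO
      refine ⟨⟨C, hC⟩, Set.eq_singleton_iff_unique_mem.mpr ⟨⟨hxC, hxF.2⟩, fun y hy => ?_⟩⟩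
      exact hW2 y ⟨hOW (hCO hy.1), hy.2⟩
    choose! A hA using key
    refine ⟨hFfin.toFinset.image A, U \ (hFfin.toFinset.image A).sup id, ?_, ?_, ?_⟩
    · intro a ha
      obtain ⟨x, hx, rfl⟩ := Finset.mem_image.mp ha
      exact cbAtom_of_singleton (hA x (hFfin.mem_toFinset.mp hx))
    · rw [Set.eq_empty_iff_forall_notMem]
      rintro y ⟨hy1, hy2⟩
      rw [TopologicalSpace.Clopens.coe_sdiff] at hy1
      have hyF : y ∈ F := ⟨hy1.1, hy2⟩
      refine hy1.2 ?_
      rw [clopens_coe_finset_sup]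
      refine Set.mem_biUnion (Finset.mem_image.mpr ⟨y, hFfin.mem_toFinset.mpr hyF, rfl⟩) ?_
      have := hA y hyF
      rw [Set.eq_singleton_iff_unique_mem] at this
      exact this.1.1
    · intro y hy
      by_cases hys : y ∈ (((hFfin.toFinset.image A).sup id : Clopens X) : Set X)
      · exact Set.mem_union_left _ hys
      · exact Set.mem_union_right _ ⟨hy, hys⟩
  · rintro ⟨s, v, hs, hv, hle⟩
    rw [Set.eq_empty_iff_forall_notMem]
    rintro x ⟨hxU, hxd⟩
    -- U ∩ M is finite
    have hUM : (U : Set X) ∩ M ⊆ (⋃ a ∈ s, ((a : Set X) ∩ M)) ∪ ((v : Set X) ∩ M) := by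
      rintro y ⟨hyU, hyM⟩
      have : y ∈ ((s.sup id ⊔ v : Clopens X) : Set X) := hle hyU
      rw [TopologicalSpace.Clopens.coe_sup, clopens_coe_finset_sup] at this
      rcases this with h | h
      · obtain ⟨a, ha, hya⟩ := Set.mem_iUnion₂.mp h
        exact Set.mem_union_left _ (Set.mem_biUnion ha ⟨hya, hyM⟩)
      · exact Set.mem_union_right _ ⟨h, hyM⟩
    have hfin : ((U : Set X) ∩ M).Finite := by
      refine Set.Finite.subset (Set.Finite.union ?_ (by rw [hv]; exact Set.finite_empty)) hUM
      refine Set.Finite.biUnion s.finite_toSet (fun a ha => ?_)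
      obtain ⟨z, hz⟩ := cbAtom_inter hbasis (hs a ha)
      rw [hz]; exact Set.finite_singleton z
    -- contradiction with x being an accumulation point of M
    have hW : ((U : Set X) \ (((U : Set X) ∩ M) \ {x})) ∈ 𝓝 x := by
      refine IsOpen.mem_nhds (U.isClopen.isOpen.sdiff ((hfin.subset Set.diff_subset).isClosed)) ?_
      exact ⟨hxU, fun h => h.2 rfl⟩
    obtain ⟨y, hy, hyne⟩ := accPt_iff_nhds.mp hxd _ hW
    exact hy.1.2 ⟨⟨hy.1.1, hy.2⟩, hyne⟩

omit [T2Space X] in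
lemma cbd_lim_char (N : Ordinal → Set X) (hcl : ∀ δ, IsClosed (N δ))
    (hmono : ∀ {δ δ'}, δ ≤ δ' → N δ' ⊆ N δ) {l : Ordinal} (hl : Order.IsSuccLimit l)
    (U : TopologicalSpace.Clopens X) :
    ((U : Set X) ∩ ⋂ (p : {δ' // δ' < l}), N p.1 = ∅) ↔
      ∃ δ' < l, (U : Set X) ∩ N δ' = ∅ := by
  constructor
  · intro h
    by_contra hc
    push_neg at hc
    have hne : ∀ p : {δ' // δ' < l}, ((U : Set X) ∩ N p.1).Nonempty := by
      intro p
      exact hc p.1 p.2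
    have : Nonempty {δ' // δ' < l} := ⟨⟨0, hl.pos⟩⟩
    have hdir : Directed (· ⊇ ·) (fun p : {δ' // δ' < l} => (U : Set X) ∩ N p.1) := by
      intro p q
      refine ⟨⟨max p.1 q.1, max_lt p.2 q.2⟩, ?_, ?_⟩
      · exact Set.inter_subset_inter_right _ (hmono (le_max_left _ _))
      · exact Set.inter_subset_inter_right _ (hmono (le_max_right _ _))
    have := IsCompact.nonempty_iInter_of_directed_nonempty_isCompact_isClosed _ hdir hne
      (fun p => (U.isClopen.isClosed.inter (hcl p.1)).isCompact)
      (fun p => U.isClopen.isClosed.inter (hcl p.1))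
    rw [← Set.inter_iInter] at this
    rw [h] at this
    exact Set.not_nonempty_empty this
  · rintro ⟨δ', hδ', h⟩
    rw [Set.eq_empty_iff_forall_notMem]
    rintro y ⟨hyU, hyI⟩
    have : y ∈ N δ' := Set.mem_iInter.mp hyI ⟨δ', hδ'⟩
    have : y ∈ (U : Set X) ∩ N δ' := ⟨hyU, this⟩
    rw [h] at this; exact this

end Atoms

section LC
open LocallyConstant TopologicalSpace

variable {X : Type*} {Y : Type*} [TopologicalSpace X] [TopologicalSpace Y]

/-- strictly positive everywhere -/
def SpLC (f : LocallyConstant X ℚ) : Prop := ∀ x, 0 < f x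
/-- nonnegative everywhere -/
def NnLC (f : LocallyConstant X ℚ) : Prop := ∀ x, 0 ≤ f x
/-- support -/
def lcSupp (f : LocallyConstant X ℚ) : Set X := {x | f x ≠ 0}

lemma isClopen_lcSupp (f : LocallyConstant X ℚ) : IsClopen (lcSupp f) := by
  constructor
  · have : lcSupp f = ({x | f x = 0} : Set X)ᶜ := by ext x; simp [lcSupp]
    rw [this, isClosed_compl_iff]
    exact f.isLocallyConstant.isOpen_fiber 0
  · exact f.isLocallyConstant ({0}ᶜ)

lemma nn_charFn {U : Set X} (hU : IsClopen U) : NnLC (charFn ℚ hU) := by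
  intro x
  have h := congrFun (coe_charFn ℚ hU) x
  rw [h]
  exact Set.indicator_nonneg (fun _ _ => zero_le_one) x

lemma lcSupp_charFn {U : Set X} (hU : IsClopen U) : lcSupp (charFn ℚ hU) = U := by
  ext x
  simp only [lcSupp, Set.mem_setOf_eq]
  rw [Ne, LocallyConstant.charFn_eq_zero]
  simp

variable [Nonempty X] [Nonempty Y]
variable (e : LocallyConstant X ℚ ≃+ LocallyConstant Y ℚ)
variable (hc : ⇑e '' {g | g = 0 ∨ ∀ x, 0 < g x} = {g | g = 0 ∨ ∀ x, 0 < g x})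

include hc in
lemma hc_symm : ⇑e.symm '' {g | g = 0 ∨ ∀ x, 0 < g x} = {g | g = 0 ∨ ∀ x, 0 < g x} := by
  rw [← hc, Set.image_image]
  simp

include hc in
lemma sp_iff (f : LocallyConstant X ℚ) : SpLC f ↔ SpLC (e f) := by
  constructor
  · intro hf
    have : e f ∈ {g | g = 0 ∨ ∀ x, 0 < g x} := by
      rw [← hc]; exact ⟨f, Or.inr hf, rfl⟩
    rcases this with h | h
    · exfalso
      have hf0 : f = 0 := e.injective (by rw [h, map_zero])
      obtain ⟨x⟩ := ‹Nonempty X›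
      have hfx := hf x
      rw [hf0] at hfx
      simp at hfx
    · exact h
  · intro hf
    have : e f ∈ {g | g = 0 ∨ ∀ x, 0 < g x} := Or.inr hf
    rw [← hc] at this
    obtain ⟨g, hg, hge⟩ := this
    have hgf : g = f := e.injective hge
    subst hgf
    rcases hg with h | h
    · exfalso
      obtain ⟨y⟩ := ‹Nonempty Y›
      have := hf y
      rw [h, map_zero] at this
      simp at this
    · exact h

lemma nn_iff_sp (f : LocallyConstant X ℚ) : NnLC f ↔ ∀ p, SpLC p → SpLC (f + p) := by
  constructor
  · intro hf p hp x
    have := add_pos_of_nonneg_of_pos (hf x) (hp x)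
    simpa using this
  · intro h x
    by_contra hx
    push_neg at hx
    have hp : SpLC (LocallyConstant.const X (-(f x))) := fun y => by
      simp only [LocallyConstant.coe_const, Function.const_apply]
      linarith
    have := h _ hp x
    simp only [LocallyConstant.add_apply, LocallyConstant.coe_const,
      Function.const_apply] at this
    linarith

include hc in
lemma nn_iff (f : LocallyConstant X ℚ) : NnLC f ↔ NnLC (e f) := by
  rw [nn_iff_sp, nn_iff_sp]
  constructor
  · intro h q hq
    have h1 : SpLC (e.symm q) := by
      have := (sp_iff e hc (e.symm q)).symm
      rw [e.apply_symm_apply] at this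
      exact this.mp hq
    have h2 := h _ h1
    have := (sp_iff e hc (f + e.symm q)).mp h2
    rwa [map_add, e.apply_symm_apply] at this
  · intro h p hp
    have h1 : SpLC (e p) := (sp_iff e hc p).mp hp
    have h2 := h _ h1
    rw [← map_add] at h2
    exact (sp_iff e hc (f + p)).mpr h2

/-- order-disjointness -/
def DDLC (f g : LocallyConstant X ℚ) : Prop :=
  ∀ h, NnLC h → NnLC (f - h) → NnLC (g - h) → h = 0

/-- order-theoretic support inclusion -/
def RRLC (f g : LocallyConstant X ℚ) : Prop := ∀ h, NnLC h → DDLC h g → DDLC h f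

lemma dd_iff {f g : LocallyConstant X ℚ} (hf : NnLC f) (hg : NnLC g) :
    DDLC f g ↔ lcSupp f ∩ lcSupp g = ∅ := by
  constructor
  · intro hD
    by_contra hne
    obtain ⟨x, hx⟩ := Set.nonempty_iff_ne_empty.mpr hne
    set h : LocallyConstant X ℚ :=
      ⟨fun y => min (f y) (g y), f.isLocallyConstant.comp₂ g.isLocallyConstant min⟩ with hh
    have h0 : h = 0 := by
      refine hD h (fun y => le_min (hf y) (hg y)) (fun y => ?_) (fun y => ?_)
      · have hy : (f - h) y = f y - min (f y) (g y) := by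
          simp [hh, LocallyConstant.sub_apply]
        rw [hy]
        exact sub_nonneg.mpr (min_le_left _ _)
      · have hy : (g - h) y = g y - min (f y) (g y) := by
          simp [hh, LocallyConstant.sub_apply]
        rw [hy]
        exact sub_nonneg.mpr (min_le_right _ _)
    have hx1 : 0 < f x := lt_of_le_of_ne (hf x) (Ne.symm hx.1)
    have hx2 : 0 < g x := lt_of_le_of_ne (hg x) (Ne.symm hx.2)
    have hmin : min (f x) (g x) = 0 := by
      have hhx : h x = 0 := by rw [h0]; simp
      simpa [hh] using hhx
    have hlt := lt_min hx1 hx2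
    rw [hmin] at hlt
    exact lt_irrefl 0 hlt
  · intro hemp h hNh h1 h2
    ext x
    simp only [LocallyConstant.coe_zero, Pi.zero_apply]
    refine le_antisymm ?_ (hNh x)
    by_cases hfx : f x = 0
    · have h1x := h1 x
      simp only [LocallyConstant.sub_apply] at h1x
      rw [hfx] at h1x
      linarith
    · have hxg : x ∉ lcSupp g := fun hxg => by
        rw [Set.eq_empty_iff_forall_notMem] at hemp
        exact hemp x ⟨hfx, hxg⟩
      simp only [lcSupp, Set.mem_setOf_eq, not_not] at hxg
      have h2x := h2 x
      simp only [LocallyConstant.sub_apply] at h2x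
      rw [hxg] at h2x
      linarith

lemma rr_iff {f g : LocallyConstant X ℚ} (hf : NnLC f) (hg : NnLC g) :
    RRLC f g ↔ lcSupp f ⊆ lcSupp g := by
  constructor
  · intro hR x hxf
    by_contra hxg
    set V := lcSupp f \ lcSupp g with hV
    have hVc : IsClopen V := (isClopen_lcSupp f).diff (isClopen_lcSupp g)
    have hDg : DDLC (charFn ℚ hVc) g := by
      rw [dd_iff (nn_charFn hVc) hg, lcSupp_charFn]
      rw [Set.eq_empty_iff_forall_notMem]
      rintro y ⟨hy1, hy2⟩
      exact hy1.2 hy2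
    have hDf := hR _ (nn_charFn hVc) hDg
    rw [dd_iff (nn_charFn hVc) hf, lcSupp_charFn] at hDf
    rw [Set.eq_empty_iff_forall_notMem] at hDf
    exact hDf x ⟨⟨hxf, hxg⟩, hxf⟩
  · intro hsub h hNh hDg
    rw [dd_iff hNh hg] at hDg
    rw [dd_iff hNh hf]
    rw [Set.eq_empty_iff_forall_notMem] at hDg ⊢
    rintro x ⟨hx1, hx2⟩
    exact hDg x ⟨hx1, hsub hx2⟩

include hc in
lemma dd_map {f g : LocallyConstant X ℚ} (hD : DDLC f g) : DDLC (e f) (e g) := by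
  intro h' hN h1 h2
  have key : e.symm h' = 0 := by
    refine hD (e.symm h') ?_ ?_ ?_
    · have := (nn_iff e hc (e.symm h')).symm
      rw [e.apply_symm_apply] at this
      exact this.mp hN
    · have := (nn_iff e hc (f - e.symm h')).symm
      rw [map_sub, e.apply_symm_apply] at this
      exact this.mp h1
    · have := (nn_iff e hc (g - e.symm h')).symm
      rw [map_sub, e.apply_symm_apply] at this
      exact this.mp h2
  have := congrArg e key
  rwa [e.apply_symm_apply, map_zero] at this

include hc in
lemma rr_map {f g : LocallyConstant X ℚ} (hR : RRLC f g) : RRLC (e f) (e g) := by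
  intro h' hN hDg
  have h1 : NnLC (e.symm h') := by
    have := (nn_iff e hc (e.symm h')).symm
    rw [e.apply_symm_apply] at this
    exact this.mp hN
  have h2 : DDLC (e.symm h') (e.symm (e g)) := dd_map e.symm (hc_symm e hc) hDg
  rw [e.symm_apply_apply] at h2
  have h3 : DDLC (e.symm h') f := hR _ h1 h2
  have h4 := dd_map e hc h3
  rwa [e.apply_symm_apply] at h4

include hc in
lemma supp_subset_iff {f g : LocallyConstant X ℚ} (hf : NnLC f) (hg : NnLC g) :
    lcSupp (e f) ⊆ lcSupp (e g) ↔ lcSupp f ⊆ lcSupp g := by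
  have hef : NnLC (e f) := (nn_iff e hc f).mp hf
  have heg : NnLC (e g) := (nn_iff e hc g).mp hg
  rw [← rr_iff hf hg, ← rr_iff hef heg]
  constructor
  · intro hR
    have := rr_map e.symm (hc_symm e hc) hR
    rwa [e.symm_apply_apply, e.symm_apply_apply] at this
  · exact rr_map e hc

end LC

section Phi
open LocallyConstant TopologicalSpace

variable {X : Type*} {Y : Type*} [TopologicalSpace X] [TopologicalSpace Y]
variable [Nonempty X] [Nonempty Y]
variable (e : LocallyConstant X ℚ ≃+ LocallyConstant Y ℚ)
variable (hc : ⇑e '' {g | g = 0 ∨ ∀ x, 0 < g x} = {g | g = 0 ∨ ∀ x, 0 < g x})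

include hc in
lemma phi_aux (U : Clopens X) :
    lcSupp (e.symm (charFn ℚ (isClopen_lcSupp (e (charFn ℚ U.isClopen))))) = (U : Set X) := by
  set f := charFn ℚ U.isClopen with hf
  set g := charFn ℚ (isClopen_lcSupp (e f)) with hgdef
  have hg : lcSupp g = lcSupp (e f) := lcSupp_charFn _
  have hNg : NnLC g := nn_charFn _
  have hNef : NnLC (e f) := (nn_iff e hc f).mp (nn_charFn _)
  have key1 := (supp_subset_iff e.symm (hc_symm e hc) hNg hNef).mpr (le_of_eq hg)
  have key2 := (supp_subset_iff e.symm (hc_symm e hc) hNef hNg).mpr (le_of_eq hg.symm)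
  have heq : lcSupp (e.symm g) = lcSupp (e.symm (e f)) := subset_antisymm key1 key2
  rw [heq, e.symm_apply_apply, hf, lcSupp_charFn]

/-- The induced order isomorphism of clopen algebras. -/
noncomputable def PhiMap : Clopens X ≃o Clopens Y where
  toEquiv :=
  { toFun := fun U => ⟨lcSupp (e (charFn ℚ U.isClopen)), isClopen_lcSupp _⟩
    invFun := fun V => ⟨lcSupp (e.symm (charFn ℚ V.isClopen)), isClopen_lcSupp _⟩
    left_inv := fun U => by
      apply SetLike.coe_injective
      exact phi_aux e hc U
    right_inv := fun V => by
      apply SetLike.coe_injective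
      have := phi_aux e.symm (hc_symm e hc) V
      simpa using this }
  map_rel_iff' := by
    intro U V
    simp only [Equiv.coe_fn_mk]
    rw [← SetLike.coe_subset_coe, ← SetLike.coe_subset_coe (S := U) (T := V)]
    show lcSupp (e (charFn ℚ U.isClopen)) ⊆ lcSupp (e (charFn ℚ V.isClopen)) ↔ _
    rw [supp_subset_iff e hc (nn_charFn _) (nn_charFn _), lcSupp_charFn, lcSupp_charFn]

end Phi

section Transfer
open TopologicalSpace

lemma orderIso_map_finset_sup {A B : Type*} [Lattice A] [OrderBot A] [Lattice B] [OrderBot B]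
    (Φ : A ≃o B) (s : Finset A) : Φ (s.sup id) = s.sup (⇑Φ) := by
  classical
  induction s using Finset.induction_on with
  | empty => simpa using Φ.map_bot
  | insert _ _ h ih =>
    rw [Finset.sup_insert, Finset.sup_insert, Φ.map_sup, ih]
    rfl

variable {X Y : Type*} [TopologicalSpace X] [TopologicalSpace Y]
  [T2Space X] [CompactSpace X] [T2Space Y] [CompactSpace Y]

lemma succ_step
    (hbX : ∀ {U : Set X}, IsOpen U → ∀ {x}, x ∈ U → ∃ C : Set X, IsClopen C ∧ x ∈ C ∧ C ⊆ U)
    (hbY : ∀ {U : Set Y}, IsOpen U → ∀ {x}, x ∈ U → ∃ C : Set Y, IsClopen C ∧ x ∈ C ∧ C ⊆ U)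
    (Φ : Clopens X ≃o Clopens Y) {M : Set X} {N : Set Y} (hM : IsClosed M) (hN : IsClosed N)
    (IH : ∀ W : Clopens X, ((W : Set X) ∩ M = ∅) ↔ ((Φ W : Set Y) ∩ N = ∅))
    (U : Clopens X) (h : (U : Set X) ∩ derivedSet M = ∅) :
    ((Φ U : Set Y) ∩ derivedSet N = ∅) := by
  classical
  obtain ⟨s, v, hs, hv, hle⟩ := (cbd_succ_char hbX hM U).mp h
  rw [cbd_succ_char hbY hN]
  refine ⟨s.image Φ, Φ v, ?_, (IH v).mp hv, ?_⟩
  · intro a' ha'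
    obtain ⟨a, ha, rfl⟩ := Finset.mem_image.mp ha'
    have hA := hs a ha
    constructor
    · intro hemp
      exact hA.1 ((IH a).mpr hemp)
    · intro b c hbc hdisj
      have h1 : Φ.symm b ⊔ Φ.symm c = a := by
        rw [← Φ.symm.map_sup, hbc, Φ.symm_apply_apply]
      have h2 : Φ.symm b ⊓ Φ.symm c = ⊥ := by
        rw [← Φ.symm.map_inf, hdisj, Φ.symm.map_bot]
      rcases hA.2 _ _ h1 h2 with h' | h'
      · left
        have := (IH _).mp h'
        rwa [Φ.apply_symm_apply] at this
      · right
        have := (IH _).mp h'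
        rwa [Φ.apply_symm_apply] at this
  · have hmon : Φ U ≤ Φ (s.sup id ⊔ v) := Φ.monotone hle
    rw [Φ.map_sup, orderIso_map_finset_sup] at hmon
    rw [Finset.sup_image]
    exact hmon

lemma cbd_transfer
    (hbX : ∀ {U : Set X}, IsOpen U → ∀ {x}, x ∈ U → ∃ C : Set X, IsClopen C ∧ x ∈ C ∧ C ⊆ U)
    (hbY : ∀ {U : Set Y}, IsOpen U → ∀ {x}, x ∈ U → ∃ C : Set Y, IsClopen C ∧ x ∈ C ∧ C ⊆ U)
    (Φ : Clopens X ≃o Clopens Y) (δ : Ordinal) :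
    ∀ U : Clopens X, ((U : Set X) ∩ cbd X δ = ∅) ↔ ((Φ U : Set Y) ∩ cbd Y δ = ∅) := by
  induction δ using Ordinal.limitRecOn with
  | zero =>
    intro U
    rw [cbd_zero, cbd_zero, Set.inter_univ, Set.inter_univ]
    constructor
    · intro h
      have : U = ⊥ := SetLike.coe_injective (by rw [h]; rfl)
      rw [this, Φ.map_bot]
      rfl
    · intro h
      have h2 : Φ U = ⊥ := SetLike.coe_injective (by rw [h]; rfl)
      have : U = ⊥ := by
        have := congrArg Φ.symm h2
        rwa [Φ.symm_apply_apply, Φ.symm.map_bot] at this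
      rw [this]
      rfl
  | add_one δ ih =>
    intro U
    rw [Ordinal.add_one_eq_succ, cbd_succ, cbd_succ]
    constructor
    · exact succ_step hbX hbY Φ (isClosed_cbd X δ) (isClosed_cbd Y δ) ih U
    · intro h
      have ih' : ∀ W : Clopens Y, ((W : Set Y) ∩ cbd Y δ = ∅) ↔
          ((Φ.symm W : Set X) ∩ cbd X δ = ∅) := by
        intro W
        have := ih (Φ.symm W)
        rw [Φ.apply_symm_apply] at this
        exact this.symm
      have := succ_step hbY hbX Φ.symm (isClosed_cbd Y δ) (isClosed_cbd X δ) ih' (Φ U) h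
      rwa [Φ.symm_apply_apply] at this
  | limit l hl ih =>
    intro U
    rw [cbd_limit X hl, cbd_limit Y hl,
      cbd_lim_char (cbd X) (isClosed_cbd X) (fun h' => cbd_mono X h') hl U,
      cbd_lim_char (cbd Y) (isClosed_cbd Y) (fun h' => cbd_mono Y h') hl (Φ U)]
    constructor
    · rintro ⟨δ', hδ', hemp⟩
      exact ⟨δ', hδ', (ih δ' hδ' U).mp hemp⟩
    · rintro ⟨δ', hδ', hemp⟩
      exact ⟨δ', hδ', (ih δ' hδ' U).mpr hemp⟩

end Transfer

section OrdinalCompute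
open Ordinal

variable {γ : Ordinal}

instance : CompactSpace (Set.Iic γ) :=
  isCompact_iff_compactSpace.mp (by rw [← Set.Icc_bot]; exact isCompact_Icc)

/-- nonzero multiples of `ω ^ δ` inside `Iic γ` -/
def mulSet (γ δ : Ordinal) : Set (Set.Iic γ) :=
  {x | (x : Ordinal) ≠ 0 ∧ ω ^ δ ∣ (x : Ordinal)}

lemma image_mulSet (δ : Ordinal) :
    Subtype.val '' mulSet γ δ = {o : Ordinal | o ≤ γ ∧ o ≠ 0 ∧ ω ^ δ ∣ o} := by
  ext o
  constructor
  · rintro ⟨x, hx, rfl⟩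
    exact ⟨x.2, hx⟩
  · rintro ⟨h1, h2, h3⟩
    exact ⟨⟨o, h1⟩, ⟨h2, h3⟩, rfl⟩

lemma acc_mul_iff {δ p : Ordinal} (hp : p ≤ γ) :
    AccPt p (Filter.principal {o : Ordinal | o ≤ γ ∧ o ≠ 0 ∧ ω ^ δ ∣ o}) ↔
      (p ≠ 0 ∧ ω ^ (δ + 1) ∣ p) := by
  have hωδ : (ω : Ordinal) ^ δ ≠ 0 := opow_ne_zero δ omega0_ne_zero
  have hωδpos : (0 : Ordinal) < ω ^ δ := opow_pos δ omega0_pos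
  rw [show AccPt p (Filter.principal {o : Ordinal | o ≤ γ ∧ o ≠ 0 ∧ ω ^ δ ∣ o}) ↔
      p.IsAcc {o : Ordinal | o ≤ γ ∧ o ≠ 0 ∧ ω ^ δ ∣ o} from Iff.rfl, Ordinal.isAcc_iff]
  constructor
  · rintro ⟨h0, hforall⟩
    refine ⟨h0, ?_⟩
    -- Claim 1 : ω ^ δ ∣ p
    have claim1 : ω ^ δ ∣ p := by
      by_contra hnd
      have hlt : ω ^ δ * (p / ω ^ δ) < p := by
        rcases lt_or_eq_of_le (mul_div_le p (ω ^ δ)) with h | h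
        · exact h
        · exact absurd ⟨p / ω ^ δ, h.symm⟩ hnd
      obtain ⟨m, hmS, hm1, hm2⟩ := hforall _ hlt
      obtain ⟨c, hc⟩ := hmS.2.2
      have hcgt : p / ω ^ δ < c := by
        rw [hc] at hm1
        exact (mul_lt_mul_iff_right₀ hωδpos).mp hm1
      have : p < m := by
        calc p < ω ^ δ * Order.succ (p / ω ^ δ) := lt_mul_succ_div p hωδ
        _ ≤ ω ^ δ * c := mul_le_mul_right (Order.succ_le_iff.mpr hcgt) _
        _ = m := hc.symm
      exact absurd hm2 (not_lt.mpr this.le)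
    obtain ⟨c, hc⟩ := claim1
    have hc0 : c ≠ 0 := by rintro rfl; rw [mul_zero] at hc; exact h0 hc
    -- Claim 2 : c is a limit ordinal
    have claim2 : Order.IsSuccLimit c := by
      refine Ordinal.isSuccLimit_iff.mpr ⟨hc0, Order.isSuccPrelimit_of_succ_ne fun c' hc' => ?_⟩
      subst hc'
      have hq' : ω ^ δ * c' < p := by
        rw [hc]
        exact (mul_lt_mul_iff_right₀ hωδpos).mpr (Order.lt_succ c')
      obtain ⟨m, hmS, hm1, hm2⟩ := hforall _ hq'
      obtain ⟨c'', hc''⟩ := hmS.2.2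
      have h1 : c' < c'' := by
        rw [hc''] at hm1
        exact (mul_lt_mul_iff_right₀ hωδpos).mp hm1
      have h2 : c'' < Order.succ c' := by
        rw [hc, hc''] at hm2
        exact (mul_lt_mul_iff_right₀ hωδpos).mp hm2
      exact absurd h1 (not_lt.mpr (Order.lt_succ_iff.mp h2))
    obtain ⟨d, hd⟩ := (isSuccLimit_iff_omega0_dvd.mp claim2).2
    refine ⟨d, ?_⟩
    rw [hc, hd, ← mul_assoc, ← opow_succ, Ordinal.add_one_eq_succ]
  · rintro ⟨h0, d, hd⟩
    have hd0 : d ≠ 0 := by rintro rfl; rw [mul_zero] at hd; exact h0 hd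
    have hlim : Order.IsSuccLimit (ω * d) :=
      isSuccLimit_mul_left isSuccLimit_omega0 (pos_iff_ne_zero.mpr hd0)
    have hpd : p = ω ^ δ * (ω * d) := by
      rw [hd, Ordinal.add_one_eq_succ, opow_succ, mul_assoc]
    refine ⟨h0, fun q hq => ?_⟩
    set m := ω ^ δ * Order.succ (q / ω ^ δ) with hm
    have hqm : q < m := lt_mul_succ_div q hωδ
    have hq' : q / ω ^ δ < ω * d := by
      rw [Ordinal.div_lt hωδ, ← hpd]
      exact hq
    have hmp : m < p := by
      rw [hpd, hm]
      exact (mul_lt_mul_iff_right₀ hωδpos).mpr (hlim.succ_lt hq')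
    refine ⟨m, ⟨(hmp.le.trans hp), ?_, ⟨_, rfl⟩⟩, hqm, hmp⟩
    exact pos_iff_ne_zero.mp (lt_of_le_of_lt zero_le hqm)

lemma derivedSet_mulSet (δ : Ordinal) :
    derivedSet (mulSet γ δ) = mulSet γ (δ + 1) := by
  ext x
  rw [mem_derivedSet, accPt_subtype_iff, image_mulSet]
  exact acc_mul_iff x.2

lemma derivedSet_univ_Iic :
    derivedSet (Set.univ : Set (Set.Iic γ)) = mulSet γ 1 := by
  have h : (Set.univ : Set (Set.Iic γ)) = mulSet γ 0 ∪ {⟨0, (zero_le : (0 : Ordinal) ≤ γ)⟩} := by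
    ext x
    simp only [Set.mem_univ, true_iff, Set.mem_union, Set.mem_singleton_iff, mulSet,
      Set.mem_setOf_eq, opow_zero, one_dvd, and_true]
    by_cases h0 : (x : Ordinal) = 0
    · exact Or.inr (Subtype.ext h0)
    · exact Or.inl h0
  rw [h, derivedSet_union, derivedSet_singleton, Set.union_empty]
  have := derivedSet_mulSet (γ := γ) 0
  rwa [zero_add] at this

lemma cbd_Iic_succ_eq (δ : Ordinal) :
    cbd (Set.Iic γ) (Order.succ δ) = mulSet γ (δ + 1) := by
  induction δ using Ordinal.limitRecOn with
  | zero =>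
    rw [cbd_succ, cbd_zero, derivedSet_univ_Iic, zero_add]
  | add_one o ih =>
    rw [cbd_succ, Ordinal.add_one_eq_succ o, ih, derivedSet_mulSet]
    simp [Ordinal.add_one_eq_succ, -Order.succ_eq_add_one]
  | limit l hl ih =>
    have hlim : cbd (Set.Iic γ) l = mulSet γ l := by
      rw [cbd_limit _ hl]
      apply subset_antisymm
      · intro x hx
        have hmem : ∀ δ' (h : δ' < l), x ∈ mulSet γ (δ' + 1) := by
          intro δ' h
          have h2 := Set.mem_iInter.mp hx ⟨Order.succ δ', hl.succ_lt h⟩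
          rwa [ih δ' h] at h2
        have h0 : (x : Ordinal) ≠ 0 := (hmem 0 hl.pos).1
        refine ⟨h0, ?_⟩
        by_contra hnd
        set r := (x : Ordinal) % ω ^ l with hr
        have hr0 : r ≠ 0 := fun h => hnd (dvd_of_mod_eq_zero h)
        have hrlt : r < ω ^ l := mod_lt _ (opow_ne_zero l omega0_ne_zero)
        obtain ⟨δ', hδ'l, hrδ'⟩ := (lt_opow_of_isSuccLimit omega0_ne_zero hl).mp hrlt
        have hdvd : ω ^ δ' ∣ (x : Ordinal) := by
          have := (hmem δ' hδ'l).2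
          exact dvd_trans (opow_dvd_opow ω (le_of_lt (lt_add_one δ'))) this
        have hdvd2 : ω ^ δ' ∣ ω ^ l * ((x : Ordinal) / ω ^ l) :=
          Dvd.dvd.mul_right (opow_dvd_opow ω hδ'l.le) _
        have hdvdr : ω ^ δ' ∣ r := by
          have hsplit := div_add_mod (x : Ordinal) (ω ^ l)
          have := (Ordinal.dvd_add_iff hdvd2).mp (by rw [hsplit]; exact hdvd)
          exact this
        exact absurd (Ordinal.le_of_dvd hr0 hdvdr) (not_le.mpr hrδ')
      · intro x hx
        refine Set.mem_iInter.mpr ?_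
        rintro ⟨δ', hδ'⟩
        have hx' : x ∈ mulSet γ (δ' + 1) := by
          refine ⟨hx.1, dvd_trans (opow_dvd_opow ω ?_) hx.2⟩
          rw [Ordinal.add_one_eq_succ, Order.succ_le_iff]
          exact hδ'
        have : x ∈ cbd (Set.Iic γ) (Order.succ δ') := by rw [ih δ' hδ']; exact hx'
        exact cbd_mono _ (Order.le_succ δ') this
    rw [cbd_succ, hlim, derivedSet_mulSet]
end OrdinalCompute

open Ordinal in
/-- For countable ordinals `α < β` with `ω^α = α` and `ω^β = β`, there is no additive
isomorphism `LocallyConstant (Iic α) ℚ ≃+ LocallyConstant (Iic β) ℚ` carrying the strict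
cone onto the strict cone; i.e. the unital ordered groups `𝒢_{α+1}` and `𝒢_{β+1}` are
not isomorphic. -/
theorem stmt8 (α β : Ordinal) (hαc : α.card ≤ Cardinal.aleph0)
    (hβc : β.card ≤ Cardinal.aleph0)
    (hα : omega0 ^ α = α) (hβ : omega0 ^ β = β) (hlt : α < β) :
    ¬ ∃ e : LocallyConstant (Set.Iic α) ℚ ≃+ LocallyConstant (Set.Iic β) ℚ,
        ⇑e '' {g | g = 0 ∨ ∀ x, 0 < g x} = {g | g = 0 ∨ ∀ x, 0 < g x} := by
  rintro ⟨e, he⟩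
  haveI : Nonempty (Set.Iic α) := ⟨⟨0, (zero_le : (0 : Ordinal) ≤ α)⟩⟩
  haveI : Nonempty (Set.Iic β) := ⟨⟨0, (zero_le : (0 : Ordinal) ≤ β)⟩⟩
  set Φ := PhiMap e he with hΦ
  have hbX : ∀ {U : Set (Set.Iic α)}, IsOpen U → ∀ {x}, x ∈ U →
      ∃ C : Set (Set.Iic α), IsClopen C ∧ x ∈ C ∧ C ⊆ U :=
    fun {U} hU {x} hx => exists_isClopen_Iic hU hx
  have hbY : ∀ {U : Set (Set.Iic β)}, IsOpen U → ∀ {x}, x ∈ U →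
      ∃ C : Set (Set.Iic β), IsClopen C ∧ x ∈ C ∧ C ⊆ U :=
    fun {U} hU {x} hx => exists_isClopen_Iic hU hx
  have htrans := cbd_transfer hbX hbY Φ (Order.succ α) ⊤
  have hempty : ((⊤ : TopologicalSpace.Clopens (Set.Iic α)) : Set (Set.Iic α)) ∩
      cbd (Set.Iic α) (Order.succ α) = ∅ := by
    rw [cbd_Iic_succ_eq, TopologicalSpace.Clopens.coe_top, Set.univ_inter]
    rw [Set.eq_empty_iff_forall_notMem]
    rintro x ⟨hx0, hdvd⟩
    have h1 : ω ^ (α + 1) ≤ (x : Ordinal) := Ordinal.le_of_dvd hx0 hdvd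
    have h3 : α < ω ^ (α + 1) := by
      calc α = ω ^ α := hα.symm
      _ < ω ^ (α + 1) := (opow_lt_opow_iff_right one_lt_omega0).mpr (lt_add_one α)
    exact absurd (h1.trans x.2) (not_le.mpr h3)
  have hres := htrans.mp hempty
  rw [Φ.map_top, cbd_Iic_succ_eq, TopologicalSpace.Clopens.coe_top, Set.univ_inter] at hres
  have hle : ω ^ (α + 1) ≤ β := by
    calc ω ^ (α + 1) ≤ ω ^ β := by
          refine opow_le_opow_right omega0_pos ?_
          rw [Ordinal.add_one_eq_succ, Order.succ_le_iff]
          exact hlt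
    _ = β := hβ
  have hmem : (⟨ω ^ (α + 1), hle⟩ : Set.Iic β) ∈ mulSet β (α + 1) :=
    ⟨opow_ne_zero _ omega0_ne_zero, dvd_refl _⟩
  rw [hres] at hmem
  exact hmem
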